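/- Every matrix L ∈ R^{d×d} can be written as a finite sum of products of d tridiagonal Toeplitz matrices; that is, S_d = R^{d×d}. -/
import Mathlib
open Matrix


/-- `E_{n,m}` (1-based positions): 1 in position `(n, m)`, zeros elsewhere. -/
def matUnit (d : ℕ) (n m : ℤ) : Matrix (Fin d) (Fin d) ℝ :=
  Matrix.of fun i j => if (i : ℤ) + 1 = n ∧ (j : ℤ) + 1 = m then 1 else 0

/-- `To_d(1)`: tridiagonal Toeplitz matrices, `x_{ij} = w_{j-i}` for `|i-j| ≤ 1`, else `0`. -/
def Tod1 (d : ℕ) : Set (Matrix (Fin d) (Fin d) ℝ) :=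
  {A | ∃ w : ℤ → ℝ, ∀ i j : Fin d,
    A i j = if |(i : ℤ) - (j : ℤ)| ≤ 1 then w ((j : ℤ) - (i : ℤ)) else 0}

/-- `S_N`: finite sums of (ordered) products of `N` tridiagonal Toeplitz matrices. -/
def SN (d N : ℕ) : Set (Matrix (Fin d) (Fin d) ℝ) :=
  {A | ∃ n : ℕ, ∃ T : Fin n → Fin N → Matrix (Fin d) (Fin d) ℝ,
    (∀ i j, T i j ∈ Tod1 d) ∧ A = ∑ i, (List.ofFn (T i)).prod}

def Umat (d : ℕ) : Matrix (Fin d) (Fin d) ℝ :=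
  Matrix.of (fun i j => if (j : ℕ) = (i : ℕ) + 1 then 1 else 0)

def Lmat (d : ℕ) : Matrix (Fin d) (Fin d) ℝ := (Umat d)ᵀ

lemma Umat_apply (d : ℕ) (i j : Fin d) :
    Umat d i j = if (j : ℕ) = (i : ℕ) + 1 then 1 else 0 := rfl

lemma one_mem_Tod1 (d : ℕ) : (1 : Matrix (Fin d) (Fin d) ℝ) ∈ Tod1 d := by
  refine ⟨fun t => if t = 0 then 1 else 0, fun i j => ?_⟩
  rw [Matrix.one_apply]
  by_cases h : i = j
  · subst h; simp
  · have h' : (i : ℕ) ≠ (j : ℕ) := fun hh => h (Fin.ext hh)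
    rw [if_neg h]
    beta_reduce
    split_ifs <;> first | rfl | (exfalso; omega)

lemma Umat_mem_Tod1 (d : ℕ) : Umat d ∈ Tod1 d := by
  refine ⟨fun t => if t = 1 then 1 else 0, fun i j => ?_⟩
  rw [Umat_apply]
  beta_reduce
  simp only [abs_le]
  split_ifs <;> first | rfl | (exfalso; omega)

lemma Lmat_mem_Tod1 (d : ℕ) : Lmat d ∈ Tod1 d := by
  refine ⟨fun t => if t = -1 then 1 else 0, fun i j => ?_⟩
  have : Lmat d i j = if (i : ℕ) = (j : ℕ) + 1 then 1 else 0 := rfl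
  rw [this]
  beta_reduce
  simp only [abs_le]
  split_ifs <;> first | rfl | (exfalso; omega)

lemma smul_mem_Tod1 {d : ℕ} (c : ℝ) {A} (hA : A ∈ Tod1 d) : c • A ∈ Tod1 d := by
  obtain ⟨w, hw⟩ := hA
  refine ⟨fun t => c * w t, fun i j => ?_⟩
  simp only [Matrix.smul_apply, hw i j, smul_eq_mul]
  split_ifs <;> simp

lemma sum_double_ite {d : ℕ} (m : ℕ) (P : ℕ → Prop) [DecidablePred P] :
    (∑ k : Fin d, if (k : ℕ) = m then (if P (k : ℕ) then (1 : ℝ) else 0) else 0) =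
      if m < d ∧ P m then 1 else 0 := by
  by_cases h : m < d
  · rw [Finset.sum_eq_single (⟨m, h⟩ : Fin d)]
    · simp [h]
    · intro k _ hk
      rw [if_neg (fun hh => hk (Fin.ext hh))]
    · simp
  · rw [if_neg (by omega)]
    refine Finset.sum_eq_zero fun k _ => ?_
    have := k.isLt
    rw [if_neg (by omega)]

lemma Umat_pow_apply (d a : ℕ) (r c : Fin d) :
    (Umat d ^ a) r c = if (c : ℕ) = (r : ℕ) + a then 1 else 0 := by
  induction a generalizing c with
  | zero =>
    rw [pow_zero, Matrix.one_apply]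
    by_cases h : r = c
    · subst h; simp
    · rw [if_neg h, if_neg (fun hh => h (Fin.ext (by omega)))]
  | succ a ih =>
    rw [pow_succ, Matrix.mul_apply]
    have hc := c.isLt
    calc (∑ k, (Umat d ^ a) r k * Umat d k c)
        = ∑ k : Fin d, (if (k : ℕ) = (r : ℕ) + a then (if (c : ℕ) = (k : ℕ) + 1 then (1:ℝ) else 0) else 0) := by
          refine Finset.sum_congr rfl fun k _ => ?_
          rw [ih, Umat_apply, ite_mul, one_mul, zero_mul]
      _ = if (r : ℕ) + a < d ∧ (c : ℕ) = ((r : ℕ) + a) + 1 then 1 else 0 :=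
          sum_double_ite ((r : ℕ) + a) (fun x => (c : ℕ) = x + 1)
      _ = if (c : ℕ) = (r : ℕ) + (a + 1) then 1 else 0 := by
          split_ifs <;> first | rfl | (exfalso; omega)

lemma Lmat_pow_apply (d a : ℕ) (r c : Fin d) :
    (Lmat d ^ a) r c = if (r : ℕ) = (c : ℕ) + a then 1 else 0 := by
  rw [show Lmat d = (Umat d)ᵀ from rfl, ← Matrix.transpose_pow, Matrix.transpose_apply,
    Umat_pow_apply]

lemma UL_apply (d a b : ℕ) (r c : Fin d) :
    (Umat d ^ a * Lmat d ^ b) r c =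
      if (r : ℕ) + a < d ∧ (r : ℕ) + a = (c : ℕ) + b then 1 else 0 := by
  rw [Matrix.mul_apply]
  calc (∑ k, (Umat d ^ a) r k * (Lmat d ^ b) k c)
      = ∑ k : Fin d, (if (k : ℕ) = (r : ℕ) + a then (if (k : ℕ) = (c : ℕ) + b then (1:ℝ) else 0) else 0) := by
        refine Finset.sum_congr rfl fun k _ => ?_
        rw [Umat_pow_apply, Lmat_pow_apply, ite_mul, one_mul, zero_mul]
    _ = if (r : ℕ) + a < d ∧ (r : ℕ) + a = (c : ℕ) + b then 1 else 0 := by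
        rw [sum_double_ite ((r : ℕ) + a) (fun x => x = (c : ℕ) + b)]

lemma LU_apply (d a b : ℕ) (r c : Fin d) :
    (Lmat d ^ b * Umat d ^ a) r c =
      if b ≤ (r : ℕ) ∧ (c : ℕ) + b = (r : ℕ) + a then 1 else 0 := by
  rw [Matrix.mul_apply]
  by_cases hb : b ≤ (r : ℕ)
  · have hr := r.isLt
    have hc := c.isLt
    calc (∑ k, (Lmat d ^ b) r k * (Umat d ^ a) k c)
        = ∑ k : Fin d, (if (k : ℕ) = (r : ℕ) - b then (if (c : ℕ) = (k : ℕ) + a then (1:ℝ) else 0) else 0) := by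
          refine Finset.sum_congr rfl fun k _ => ?_
          rw [Lmat_pow_apply, Umat_pow_apply]
          split_ifs <;> first | (exfalso; omega) | simp
      _ = if (r : ℕ) - b < d ∧ (c : ℕ) = ((r : ℕ) - b) + a then 1 else 0 :=
          sum_double_ite ((r : ℕ) - b) (fun x => (c : ℕ) = x + a)
      _ = _ := by split_ifs <;> first | rfl | (exfalso; omega)
  · rw [if_neg (by omega)]
    refine Finset.sum_eq_zero fun k _ => ?_
    rw [Lmat_pow_apply, if_neg (by omega), zero_mul]

lemma zero_mem_SN (d N : ℕ) : 0 ∈ SN d N :=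
  ⟨0, Fin.elim0, fun i => i.elim0, by simp⟩

lemma add_mem_SN {d N : ℕ} {A B : Matrix (Fin d) (Fin d) ℝ}
    (hA : A ∈ SN d N) (hB : B ∈ SN d N) : A + B ∈ SN d N := by
  obtain ⟨n, T, hT, rfl⟩ := hA
  obtain ⟨m, S, hS, rfl⟩ := hB
  refine ⟨n + m, Fin.append T S, fun i j => ?_, ?_⟩
  · refine Fin.addCases (fun i => ?_) (fun i => ?_) i
    · rw [Fin.append_left]; exact hT i j
    · rw [Fin.append_right]; exact hS i j
  · rw [Fin.sum_univ_add]
    congr 1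
    · exact Finset.sum_congr rfl fun i _ => by rw [Fin.append_left]
    · exact Finset.sum_congr rfl fun i _ => by rw [Fin.append_right]

lemma smul_mem_SN {d N : ℕ} (hN : N ≠ 0) (c : ℝ) {A : Matrix (Fin d) (Fin d) ℝ}
    (hA : A ∈ SN d N) : c • A ∈ SN d N := by
  obtain ⟨N', rfl⟩ : ∃ N', N = N' + 1 := ⟨N - 1, by omega⟩
  obtain ⟨n, T, hT, rfl⟩ := hA
  refine ⟨n, fun i => Fin.cons (c • T i 0) (fun k => T i k.succ), fun i j => ?_, ?_⟩
  · beta_reduce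
    refine Fin.cases ?_ ?_ j
    · rw [Fin.cons_zero]; exact smul_mem_Tod1 c (hT i 0)
    · intro k; rw [Fin.cons_succ]; exact hT i k.succ
  · rw [Finset.smul_sum]
    refine Finset.sum_congr rfl fun i _ => ?_
    beta_reduce
    rw [List.ofFn_succ, List.ofFn_succ, List.prod_cons, List.prod_cons, Fin.cons_zero]
    have h2 : (fun k : Fin N' => Fin.cons (α := fun _ => Matrix (Fin d) (Fin d) ℝ)
          (c • T i 0) (fun k => T i k.succ) k.succ)
        = fun k : Fin N' => T i k.succ := by
      funext k; rw [Fin.cons_succ]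
    rw [h2, smul_mul_assoc]

lemma sub_mem_SN {d N : ℕ} (hN : N ≠ 0) {A B : Matrix (Fin d) (Fin d) ℝ}
    (hA : A ∈ SN d N) (hB : B ∈ SN d N) : A - B ∈ SN d N := by
  rw [sub_eq_add_neg, ← neg_one_smul ℝ B]
  exact add_mem_SN hA (smul_mem_SN hN (-1) hB)

lemma pow_mul_pow_mem {d : ℕ} {A B : Matrix (Fin d) (Fin d) ℝ}
    (hA : A ∈ Tod1 d) (hB : B ∈ Tod1 d) (a b : ℕ) (hab : a + b ≤ d) :
    A ^ a * B ^ b ∈ SN d d := by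
  obtain ⟨e, rfl⟩ : ∃ e, d = a + (b + e) := ⟨d - a - b, by omega⟩
  refine ⟨1, fun _ => Fin.append (fun _ : Fin a => A)
      (Fin.append (fun _ : Fin b => B) (fun _ : Fin e => 1)), fun _ j => ?_, ?_⟩
  · beta_reduce
    refine Fin.addCases (fun i => ?_) (fun i => ?_) j
    · rw [Fin.append_left]; exact hA
    · rw [Fin.append_right]
      refine Fin.addCases (fun i => ?_) (fun i => ?_) i
      · rw [Fin.append_left]; exact hB
      · rw [Fin.append_right]; exact one_mem_Tod1 _
  · rw [Fin.sum_univ_one]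
    have h1 : List.ofFn (Fin.append (fun _ : Fin a => A)
        (Fin.append (fun _ : Fin b => B) (fun _ : Fin e => 1)))
        = List.replicate a A ++ (List.replicate b B ++ List.replicate e 1) := by
      rw [List.ofFn_add, List.ofFn_add]
      simp [Fin.append_left, Fin.append_right]
    rw [h1, List.prod_append, List.prod_append, List.prod_replicate, List.prod_replicate,
      List.prod_replicate, one_pow, mul_one]

def eMat (d : ℕ) (i j : Fin d) : Matrix (Fin d) (Fin d) ℝ :=
  Matrix.of (fun r c => if (r : ℕ) = (i : ℕ) ∧ (c : ℕ) = (j : ℕ) then 1 else 0)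

lemma eMat_apply (d : ℕ) (i j r c : Fin d) :
    eMat d i j r c = if (r : ℕ) = (i : ℕ) ∧ (c : ℕ) = (j : ℕ) then 1 else 0 := rfl

lemma eMat_mem (d : ℕ) (i j : Fin d) : eMat d i j ∈ SN d d := by
  have hd : d ≠ 0 := by have := i.isLt; omega
  have hU := Umat_mem_Tod1 d
  have hL := Lmat_mem_Tod1 d
  have hi := i.isLt
  have hj := j.isLt
  rcases le_or_gt ((i : ℕ) + (j : ℕ) + 2) d with h | h
  · -- low case : E = L^i U^j - L^(i+1) U^(j+1)
    have key : eMat d i j = Lmat d ^ (i : ℕ) * Umat d ^ (j : ℕ)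
        - Lmat d ^ ((i : ℕ) + 1) * Umat d ^ ((j : ℕ) + 1) := by
      ext r c
      have hr := r.isLt
      have hc := c.isLt
      rw [Matrix.sub_apply, LU_apply, LU_apply, eMat_apply]
      split_ifs <;> first | (exfalso; omega) | norm_num
    rw [key]
    exact sub_mem_SN hd (pow_mul_pow_mem hL hU _ _ (by omega))
      (pow_mul_pow_mem hL hU _ _ (by omega))
  rcases le_or_gt ((i : ℕ) + (j : ℕ)) d with h2 | h2
  · -- middle case : E = U^(d-1-i) L^(d-1-j) + L^i U^j - (diagonal shift)
    rcases le_total (i : ℕ) (j : ℕ) with hij | hij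
    · have key : eMat d i j = (Umat d ^ (d - 1 - (i : ℕ)) * Lmat d ^ (d - 1 - (j : ℕ))
          + Lmat d ^ (i : ℕ) * Umat d ^ (j : ℕ))
          - Umat d ^ ((j : ℕ) - (i : ℕ)) * Lmat d ^ 0 := by
        ext r c
        have hr := r.isLt
        have hc := c.isLt
        rw [Matrix.sub_apply, Matrix.add_apply, UL_apply, LU_apply, UL_apply, eMat_apply]
        split_ifs <;> first | (exfalso; omega) | norm_num
      rw [key]
      exact sub_mem_SN hd
        (add_mem_SN (pow_mul_pow_mem hU hL _ _ (by omega))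
          (pow_mul_pow_mem hL hU _ _ (by omega)))
        (pow_mul_pow_mem hU hL _ _ (by omega))
    · have key : eMat d i j = (Umat d ^ (d - 1 - (i : ℕ)) * Lmat d ^ (d - 1 - (j : ℕ))
          + Lmat d ^ (i : ℕ) * Umat d ^ (j : ℕ))
          - Lmat d ^ ((i : ℕ) - (j : ℕ)) * Umat d ^ 0 := by
        ext r c
        have hr := r.isLt
        have hc := c.isLt
        rw [Matrix.sub_apply, Matrix.add_apply, UL_apply, LU_apply, LU_apply, eMat_apply]
        split_ifs <;> first | (exfalso; omega) | norm_num
      rw [key]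
      exact sub_mem_SN hd
        (add_mem_SN (pow_mul_pow_mem hU hL _ _ (by omega))
          (pow_mul_pow_mem hL hU _ _ (by omega)))
        (pow_mul_pow_mem hL hU _ _ (by omega))
  · -- high case : E = U^(d-1-i) L^(d-1-j) - U^(d-i) L^(d-j)
    have key : eMat d i j = Umat d ^ (d - 1 - (i : ℕ)) * Lmat d ^ (d - 1 - (j : ℕ))
        - Umat d ^ (d - (i : ℕ)) * Lmat d ^ (d - (j : ℕ)) := by
      ext r c
      have hr := r.isLt
      have hc := c.isLt
      rw [Matrix.sub_apply, UL_apply, UL_apply, eMat_apply]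
      split_ifs <;> first | (exfalso; omega) | norm_num
    rw [key]
    exact sub_mem_SN hd (pow_mul_pow_mem hU hL _ _ (by omega))
      (pow_mul_pow_mem hU hL _ _ (by omega))

/-- Every matrix `L ∈ ℝ^{d×d}` is a finite sum of products of `d` tridiagonal
Toeplitz matrices: `S_d = ℝ^{d×d}`. -/
theorem SN_eq_univ (d : ℕ) : ∀ L : Matrix (Fin d) (Fin d) ℝ, L ∈ SN d d := by
  intro L
  rcases Nat.eq_zero_or_pos d with rfl | hd
  · exact ⟨0, Fin.elim0, fun i => i.elim0, by ext i j; exact i.elim0⟩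
  · have hL : L = ∑ i : Fin d, ∑ j : Fin d, L i j • eMat d i j := by
      ext r c
      simp [eMat, Matrix.sum_apply, Fin.val_inj, mul_ite, ite_and, mul_one, mul_zero,
        Finset.sum_ite_eq, Finset.sum_ite_eq']
    rw [hL]
    refine Finset.sum_induction _ _ (fun a b ha hb => add_mem_SN ha hb)
      (zero_mem_SN d d) (fun i _ => ?_)
    refine Finset.sum_induction _ _ (fun a b ha hb => add_mem_SN ha hb)
      (zero_mem_SN d d) (fun j _ => ?_)
    exact smul_mem_SN (by omega) _ (eMat_mem d i j)
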